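/- Let C be a coalgebra over a field k that is a left H-module factor coalgebra of a Hopf algebra H. For any right H-comodule U, right C-comodule V, and left C-comodule W, there is a natural isomorphism of vector spaces (U ⊗ V) □_C W ≅ V □_C (W ⊗ U), where U ⊗ V carries the coaction u ⊗ v ↦ Σ(u₍₀₎ ⊗ v₍₀₎) ⊗ u₍₁₎v₍₁₎ and W ⊗ U carries the coaction w ⊗ u ↦ Σ S(u₍₁₎)w₍₋₁₎ ⊗ (w₍₀₎ ⊗ u₍₀₎). -/
import Mathlib


open TensorProduct LinearMap Coalgebra HopfAlgebra

variable (k : Type*) [Field k]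

/-- `ρ` is a right `C`-comodule structure on `V`. -/
def IsRightComodule (C V : Type*) [AddCommGroup C] [Module k C] [Coalgebra k C]
    [AddCommGroup V] [Module k V] (ρ : V →ₗ[k] V ⊗[k] C) : Prop :=
  (∀ v : V, (TensorProduct.rid k V)
      (LinearMap.lTensor V (Coalgebra.counit (R := k) (A := C)) (ρ v)) = v) ∧
    ∀ v : V, LinearMap.lTensor V (Coalgebra.comul (R := k) (A := C)) (ρ v) =
      (TensorProduct.assoc k V C C) (LinearMap.rTensor C ρ (ρ v))

/-- `λ` is a left `C`-comodule structure on `W`. -/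
def IsLeftComodule (C W : Type*) [AddCommGroup C] [Module k C] [Coalgebra k C]
    [AddCommGroup W] [Module k W] (lam : W →ₗ[k] C ⊗[k] W) : Prop :=
  (∀ w : W, (TensorProduct.lid k W)
      (LinearMap.rTensor W (Coalgebra.counit (R := k) (A := C)) (lam w)) = w) ∧
    ∀ w : W, LinearMap.rTensor W (Coalgebra.comul (R := k) (A := C)) (lam w) =
      (TensorProduct.assoc k C C W).symm (LinearMap.lTensor C lam (lam w))

/-- The cotensor product `V □_C W`: the equalizer of `ρ ⊗ id` and `id ⊗ λ`. -/
noncomputable def cotensor (C V W : Type*) [AddCommGroup C] [Module k C]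
    [AddCommGroup V] [Module k V] [AddCommGroup W] [Module k W]
    (ρ : V →ₗ[k] V ⊗[k] C) (lam : W →ₗ[k] C ⊗[k] W) : Submodule k (V ⊗[k] W) :=
  LinearMap.ker (LinearMap.rTensor W ρ -
    (TensorProduct.assoc k V C W).symm.toLinearMap ∘ₗ LinearMap.lTensor V lam)

/-- The action `H ⊗ M → M` of an algebra `H` on a module `M`, as a linear map. -/
noncomputable def actionMap (H M : Type*) [Ring H] [Algebra k H]
    [AddCommGroup M] [Module k M] [Module H M] [IsScalarTower k H M] [SMulCommClass k H M] :
    H ⊗[k] M →ₗ[k] M :=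
  TensorProduct.lift (Algebra.lsmul k k M).toLinearMap

set_option linter.unusedSectionVars false

section Aux

variable (H C U V W : Type*) [Ring H] [HopfAlgebra k H]
    [AddCommGroup C] [Module k C] [Coalgebra k C]
    [Module H C] [IsScalarTower k H C] [SMulCommClass k H C]
    [AddCommGroup U] [Module k U] [AddCommGroup V] [Module k V]
    [AddCommGroup W] [Module k W]

@[simp] lemma actionMap_tmul (h : H) (c : C) : actionMap k H C (h ⊗ₜ[k] c) = h • c := rfl

/-- `(u ⊗ a) ⊗ ((v ⊗ c) ⊗ w) ↦ (v ⊗ a • c) ⊗ (w ⊗ u)` -/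
noncomputable def Qmap : (U ⊗[k] H) ⊗[k] ((V ⊗[k] C) ⊗[k] W) →ₗ[k] (V ⊗[k] C) ⊗[k] (W ⊗[k] U) :=
  lTensor (V ⊗[k] C) (TensorProduct.comm k U W).toLinearMap ∘ₗ
  rTensor (U ⊗[k] W) (lTensor V (actionMap k H C)) ∘ₗ
  rTensor (U ⊗[k] W) (TensorProduct.leftComm k H V C).toLinearMap ∘ₗ
  (tensorTensorTensorComm k H U (V ⊗[k] C) W).toLinearMap ∘ₗ
  rTensor ((V ⊗[k] C) ⊗[k] W) (TensorProduct.comm k U H).toLinearMap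

@[simp] lemma Qmap_tmul (u : U) (a : H) (v : V) (c : C) (w : W) :
    Qmap k H C U V W ((u ⊗ₜ[k] a) ⊗ₜ[k] ((v ⊗ₜ[k] c) ⊗ₜ[k] w)) =
      (v ⊗ₜ[k] (a • c)) ⊗ₜ[k] (w ⊗ₜ[k] u) := by
  simp [Qmap]

/-- `(u ⊗ a) ⊗ ((v ⊗ c) ⊗ w) ↦ ((u ⊗ v) ⊗ a • c) ⊗ w` -/
noncomputable def Q'map : (U ⊗[k] H) ⊗[k] ((V ⊗[k] C) ⊗[k] W) →ₗ[k] ((U ⊗[k] V) ⊗[k] C) ⊗[k] W :=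
  (TensorProduct.assoc k (U ⊗[k] V) C W).symm.toLinearMap ∘ₗ
  lTensor (U ⊗[k] V) (rTensor W (actionMap k H C)) ∘ₗ
  lTensor (U ⊗[k] V) (TensorProduct.assoc k H C W).symm.toLinearMap ∘ₗ
  (tensorTensorTensorComm k U H V (C ⊗[k] W)).toLinearMap ∘ₗ
  lTensor (U ⊗[k] H) (TensorProduct.assoc k V C W).toLinearMap

@[simp] lemma Q'map_tmul (u : U) (a : H) (v : V) (c : C) (w : W) :
    Q'map k H C U V W ((u ⊗ₜ[k] a) ⊗ₜ[k] ((v ⊗ₜ[k] c) ⊗ₜ[k] w)) =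
      ((u ⊗ₜ[k] v) ⊗ₜ[k] (a • c)) ⊗ₜ[k] w := by
  simp [Q'map]

variable (ρU : U →ₗ[k] U ⊗[k] H)

/-- `((u ⊗ v) ⊗ c) ⊗ w ↦ Σ (v ⊗ S(u₁) • c) ⊗ (w ⊗ u₀)` -/
noncomputable def Fmap : ((U ⊗[k] V) ⊗[k] C) ⊗[k] W →ₗ[k] (V ⊗[k] C) ⊗[k] (W ⊗[k] U) :=
  Qmap k H C U V W ∘ₗ
  rTensor ((V ⊗[k] C) ⊗[k] W) (lTensor U (antipode (R := k)) ∘ₗ ρU) ∘ₗ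
  (TensorProduct.assoc k U (V ⊗[k] C) W).toLinearMap ∘ₗ
  rTensor W (TensorProduct.assoc k U V C).toLinearMap

/-- `(v ⊗ c) ⊗ (w ⊗ u) ↦ Σ ((u₀ ⊗ v) ⊗ u₁ • c) ⊗ w` -/
noncomputable def Gmap : (V ⊗[k] C) ⊗[k] (W ⊗[k] U) →ₗ[k] ((U ⊗[k] V) ⊗[k] C) ⊗[k] W :=
  Q'map k H C U V W ∘ₗ
  rTensor ((V ⊗[k] C) ⊗[k] W) ρU ∘ₗ
  (TensorProduct.leftComm k (V ⊗[k] C) U W).toLinearMap ∘ₗ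
  lTensor (V ⊗[k] C) (TensorProduct.comm k W U).toLinearMap

lemma Fmap_tmul (u : U) (v : V) (c : C) (w : W) :
    Fmap k H C U V W ρU (((u ⊗ₜ[k] v) ⊗ₜ[k] c) ⊗ₜ[k] w) =
      Qmap k H C U V W ((lTensor U (antipode (R := k)) (ρU u)) ⊗ₜ[k] ((v ⊗ₜ[k] c) ⊗ₜ[k] w)) := by
  simp [Fmap]

lemma Gmap_tmul (u : U) (v : V) (c : C) (w : W) :
    Gmap k H C U V W ρU ((v ⊗ₜ[k] c) ⊗ₜ[k] (w ⊗ₜ[k] u)) =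
      Q'map k H C U V W ((ρU u) ⊗ₜ[k] ((v ⊗ₜ[k] c) ⊗ₜ[k] w)) := by
  simp [Gmap]

end Aux

set_option linter.unusedSectionVars false

section Parts

variable {k} {H C U V W : Type*} [Ring H] [HopfAlgebra k H]
    [AddCommGroup C] [Module k C] [Coalgebra k C]
    [Module H C] [IsScalarTower k H C] [SMulCommClass k H C]
    [AddCommGroup U] [Module k U] [AddCommGroup V] [Module k V]
    [AddCommGroup W] [Module k W]
    (ρU : U →ₗ[k] U ⊗[k] H) (ρV : V →ₗ[k] V ⊗[k] C) (lamW : W →ₗ[k] C ⊗[k] W)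

/-- The rearrangement `(U ⊗ V) ⊗ W ≃ V ⊗ (W ⊗ U)`. -/
noncomputable def eEquiv : (U ⊗[k] V) ⊗[k] W ≃ₗ[k] V ⊗[k] (W ⊗[k] U) :=
  (TensorProduct.assoc k U V W).trans
    ((TensorProduct.comm k U (V ⊗[k] W)).trans (TensorProduct.assoc k V W U))

@[simp] lemma eEquiv_tmul (u : U) (v : V) (w : W) :
    (eEquiv (k := k)) ((u ⊗ₜ[k] v) ⊗ₜ[k] w) = v ⊗ₜ[k] (w ⊗ₜ[k] u) := by
  simp [eEquiv]

noncomputable def rhoUV : U ⊗[k] V →ₗ[k] (U ⊗[k] V) ⊗[k] C :=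
  LinearMap.lTensor (U ⊗[k] V) (actionMap k H C) ∘ₗ
    (TensorProduct.tensorTensorTensorComm k U H V C).toLinearMap ∘ₗ
      TensorProduct.map ρU ρV

noncomputable def lamWUdef : W ⊗[k] U →ₗ[k] C ⊗[k] (W ⊗[k] U) :=
  LinearMap.lTensor C (TensorProduct.comm k U W).toLinearMap ∘ₗ
    LinearMap.rTensor (U ⊗[k] W) (actionMap k H C) ∘ₗ
      (TensorProduct.tensorTensorTensorComm k H U C W).toLinearMap ∘ₗ
        TensorProduct.map
          ((TensorProduct.comm k U H).toLinearMap ∘ₗ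
            LinearMap.lTensor U (antipode (R := k)) ∘ₗ ρU) lamW ∘ₗ
          (TensorProduct.comm k W U).toLinearMap

lemma partC :
    Gmap k H C U V W ρU ∘ₗ rTensor (W ⊗[k] U) ρV ∘ₗ (eEquiv (k := k)).toLinearMap =
      rTensor W (rhoUV ρU ρV) := by
  apply TensorProduct.ext_threefold
  intro u v w
  simp only [comp_apply, LinearEquiv.coe_coe, eEquiv_tmul, rTensor_tmul, Gmap, rhoUV,
    TensorProduct.map_tmul, lTensor_tmul, TensorProduct.comm_tmul,
    TensorProduct.leftComm_tmul]
  generalize ρU u = t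
  generalize ρV v = s
  induction t with
  | zero => simp
  | add x y hx hy => simp [add_tmul, tmul_add, hx, hy]
  | tmul u' h =>
    induction s with
    | zero => simp
    | add x y hx hy => simp [add_tmul, tmul_add, hx, hy]
    | tmul v' c => simp [TensorProduct.tensorTensorTensorComm_tmul]

lemma partB :
    Fmap k H C U V W ρU ∘ₗ (TensorProduct.assoc k (U ⊗[k] V) C W).symm.toLinearMap ∘ₗ
        lTensor (U ⊗[k] V) lamW =
      (TensorProduct.assoc k V C (W ⊗[k] U)).symm.toLinearMap ∘ₗ
        lTensor V (lamWUdef ρU lamW) ∘ₗ (eEquiv (k := k)).toLinearMap := by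
  apply TensorProduct.ext_threefold
  intro u v w
  simp only [comp_apply, LinearEquiv.coe_coe, eEquiv_tmul, lTensor_tmul, lamWUdef,
    TensorProduct.comm_tmul, TensorProduct.map_tmul]
  generalize lamW w = r
  induction r with
  | zero => simp
  | add x y hx hy => simp only [tmul_add, add_tmul, map_add, hx, hy]
  | tmul c w' =>
    simp only [TensorProduct.assoc_symm_tmul, Fmap_tmul]
    generalize lTensor U (antipode (R := k)) (ρU u) = t'
    induction t' with
    | zero => simp
    | add x y hx hy => simp only [tmul_add, add_tmul, map_add, hx, hy]
    | tmul u' h' =>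
      simp [TensorProduct.tensorTensorTensorComm_tmul]

/-- a right comodule `ρ` satisfies `(id ⊗ (unit ∘ counit)) ∘ ρ = (· ⊗ 1)`. -/
lemma hOneLem
    (hU : (∀ u : U, (TensorProduct.rid k U)
      (LinearMap.lTensor U (Coalgebra.counit (R := k) (A := H)) (ρU u)) = u)) (u : U) :
    lTensor U ((Algebra.linearMap k H) ∘ₗ (counit (R := k) (A := H))) (ρU u) =
      u ⊗ₜ[k] (1 : H) := by
  rw [lTensor_comp, comp_apply]
  have h1 : lTensor U (counit (R := k) (A := H)) (ρU u) =
      (TensorProduct.rid k U).symm u :=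
    (LinearEquiv.eq_symm_apply _).mpr (hU u)
  rw [h1, TensorProduct.rid_symm_apply]
  simp

lemma Key1 (t : U ⊗[k] H) (s : V ⊗[k] C) (w : W) :
    Fmap k H C U V W ρU
        ((lTensor (U ⊗[k] V) (actionMap k H C)
          ((TensorProduct.tensorTensorTensorComm k U H V C) (t ⊗ₜ[k] s))) ⊗ₜ[k] w) =
      Qmap k H C U V W
        ((lTensor U (LinearMap.mul' k H ∘ₗ rTensor H (antipode (R := k)))
            ((TensorProduct.assoc k U H H) (rTensor H ρU t))) ⊗ₜ[k] (s ⊗ₜ[k] w)) := by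
  induction t with
  | zero => simp
  | add x y hx hy => simp only [tmul_add, add_tmul, map_add, hx, hy]
  | tmul u' h =>
    induction s with
    | zero => simp
    | add x y hx hy => simp only [tmul_add, add_tmul, map_add, hx, hy]
    | tmul v' c =>
      simp only [TensorProduct.tensorTensorTensorComm_tmul, lTensor_tmul, actionMap_tmul,
        Fmap_tmul, rTensor_tmul]
      generalize ρU u' = t'
      induction t' with
      | zero => simp
      | add x y hx hy => simp only [tmul_add, add_tmul, map_add, hx, hy]
      | tmul u'' g =>
        simp [mul_smul]

lemma partA (hU : IsRightComodule k H U ρU) :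
    rTensor (W ⊗[k] U) ρV ∘ₗ (eEquiv (k := k)).toLinearMap =
      Fmap k H C U V W ρU ∘ₗ rTensor W (rhoUV ρU ρV) := by
  apply TensorProduct.ext_threefold
  intro u v w
  simp only [comp_apply, LinearEquiv.coe_coe, eEquiv_tmul, rTensor_tmul, rhoUV,
    TensorProduct.map_tmul]
  rw [Key1, ← hU.2 u]
  have hcomp : lTensor U (LinearMap.mul' k H ∘ₗ rTensor H (antipode (R := k)))
      (lTensor U (comul (R := k) (A := H)) (ρU u)) =
      lTensor U ((Algebra.linearMap k H) ∘ₗ (counit (R := k) (A := H))) (ρU u) := by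
    rw [← lTensor_comp_apply, LinearMap.comp_assoc,
      HopfAlgebra.mul_antipode_rTensor_comul]
  rw [hcomp, hOneLem ρU hU.1 u]
  generalize ρV v = s
  induction s with
  | zero => simp
  | add x y hx hy => simp only [tmul_add, add_tmul, map_add, hx, hy]
  | tmul v' c => simp

lemma Key2 (t : U ⊗[k] H) (v : V) (c : C) (w' : W) :
    Gmap k H C U V W ρU ((TensorProduct.assoc k V C (W ⊗[k] U)).symm (v ⊗ₜ[k]
        (lTensor C (TensorProduct.comm k U W).toLinearMap
          (rTensor (U ⊗[k] W) (actionMap k H C)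
            ((TensorProduct.tensorTensorTensorComm k H U C W)
              (((TensorProduct.comm k U H) (lTensor U (antipode (R := k)) t)) ⊗ₜ[k]
                (c ⊗ₜ[k] w'))))))) =
      Q'map k H C U V W
        ((lTensor U (LinearMap.mul' k H ∘ₗ lTensor H (antipode (R := k)))
            ((TensorProduct.assoc k U H H) (rTensor H ρU t))) ⊗ₜ[k] ((v ⊗ₜ[k] c) ⊗ₜ[k] w')) := by
  induction t with
  | zero => simp
  | add x y hx hy => simp only [tmul_add, add_tmul, map_add, hx, hy]
  | tmul u' h =>
    simp only [lTensor_tmul, TensorProduct.comm_tmul, LinearEquiv.coe_coe,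
      TensorProduct.tensorTensorTensorComm_tmul, rTensor_tmul, actionMap_tmul,
      TensorProduct.assoc_symm_tmul, Gmap_tmul]
    generalize ρU u' = t'
    induction t' with
    | zero => simp
    | add x y hx hy => simp only [tmul_add, add_tmul, map_add, hx, hy]
    | tmul u'' g => simp [mul_smul]

lemma partD (hU : IsRightComodule k H U ρU) :
    Gmap k H C U V W ρU ∘ₗ (TensorProduct.assoc k V C (W ⊗[k] U)).symm.toLinearMap ∘ₗ
        lTensor V (lamWUdef ρU lamW) ∘ₗ (eEquiv (k := k)).toLinearMap =
      (TensorProduct.assoc k (U ⊗[k] V) C W).symm.toLinearMap ∘ₗ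
        lTensor (U ⊗[k] V) lamW := by
  apply TensorProduct.ext_threefold
  intro u v w
  simp only [comp_apply, LinearEquiv.coe_coe, eEquiv_tmul, lTensor_tmul, lamWUdef,
    TensorProduct.comm_tmul, TensorProduct.map_tmul]
  generalize lamW w = r
  induction r with
  | zero => simp
  | add x y hx hy => simp only [tmul_add, add_tmul, map_add, hx, hy]
  | tmul c w' =>
    rw [Key2, ← hU.2 u]
    have hcomp : lTensor U (LinearMap.mul' k H ∘ₗ lTensor H (antipode (R := k)))
        (lTensor U (comul (R := k) (A := H)) (ρU u)) =
        lTensor U ((Algebra.linearMap k H) ∘ₗ (counit (R := k) (A := H))) (ρU u) := by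
      rw [← lTensor_comp_apply, LinearMap.comp_assoc,
        HopfAlgebra.mul_antipode_lTensor_comul]
    rw [hcomp, hOneLem ρU hU.1 u]
    simp

end Parts


section Dmap

variable {k} {C X Y : Type*} [AddCommGroup C] [Module k C] [Coalgebra k C]
    [AddCommGroup X] [Module k X] [AddCommGroup Y] [Module k Y]

lemma mem_cotensor_iff (ρ : X →ₗ[k] X ⊗[k] C) (lam : Y →ₗ[k] C ⊗[k] Y) (x : X ⊗[k] Y) :
    x ∈ cotensor k C X Y ρ lam ↔
      LinearMap.rTensor Y ρ x =
        (TensorProduct.assoc k X C Y).symm (LinearMap.lTensor X lam x) := by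
  rw [cotensor, LinearMap.mem_ker, LinearMap.sub_apply, sub_eq_zero, comp_apply,
    LinearEquiv.coe_coe]

end Dmap

/-- Let `C` be a left `H`-module factor coalgebra of a Hopf algebra `H`
over a field `k`. For a right `H`-comodule `U`, right `C`-comodule `V` and left `C`-comodule
`W`, there is an isomorphism of vector spaces `(U ⊗ V) □_C W ≅ V □_C (W ⊗ U)`, where
`U ⊗ V` carries the coaction `u ⊗ v ↦ Σ (u₍₀₎ ⊗ v₍₀₎) ⊗ u₍₁₎v₍₁₎` and `W ⊗ U` carries
the coaction `w ⊗ u ↦ Σ S(u₍₁₎)w₍₋₁₎ ⊗ (w₍₀₎ ⊗ u₍₀₎)`. -/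
theorem cotensor_tensor_iso
    (H C U V W : Type*) [Ring H] [HopfAlgebra k H]
    [AddCommGroup C] [Module k C] [Coalgebra k C]
    [Module H C] [IsScalarTower k H C] [SMulCommClass k H C]
    [AddCommGroup U] [Module k U] [AddCommGroup V] [Module k V] [AddCommGroup W] [Module k W]
    (π : H →ₗc[k] C) (hπsurj : Function.Surjective π)
    (hπlin : ∀ g h : H, π (g * h) = g • π h)
    (ρU : U →ₗ[k] U ⊗[k] H) (hU : IsRightComodule k H U ρU)
    (ρV : V →ₗ[k] V ⊗[k] C) (hV : IsRightComodule k C V ρV)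
    (lamW : W →ₗ[k] C ⊗[k] W) (hW : IsLeftComodule k C W lamW) :
    letI ρUV : U ⊗[k] V →ₗ[k] (U ⊗[k] V) ⊗[k] C :=
      LinearMap.lTensor (U ⊗[k] V) (actionMap k H C) ∘ₗ
        (TensorProduct.tensorTensorTensorComm k U H V C).toLinearMap ∘ₗ
          TensorProduct.map ρU ρV
    letI lamWU : W ⊗[k] U →ₗ[k] C ⊗[k] (W ⊗[k] U) :=
      LinearMap.lTensor C (TensorProduct.comm k U W).toLinearMap ∘ₗ
        LinearMap.rTensor (U ⊗[k] W) (actionMap k H C) ∘ₗ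
          (TensorProduct.tensorTensorTensorComm k H U C W).toLinearMap ∘ₗ
            TensorProduct.map
              ((TensorProduct.comm k U H).toLinearMap ∘ₗ
                LinearMap.lTensor U (antipode (R := k)) ∘ₗ ρU) lamW ∘ₗ
              (TensorProduct.comm k W U).toLinearMap
    Nonempty ((cotensor k C (U ⊗[k] V) W ρUV lamW) ≃ₗ[k]
      (cotensor k C V (W ⊗[k] U) ρV lamWU)) := by
  show Nonempty ((cotensor k C (U ⊗[k] V) W (rhoUV ρU ρV) lamW) ≃ₗ[k]
      (cotensor k C V (W ⊗[k] U) ρV (lamWUdef ρU lamW)))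
  have hA := LinearMap.congr_fun (partA (V := V) (W := W) ρU ρV hU)
  have hB := LinearMap.congr_fun (partB (V := V) ρU lamW)
  have hC := LinearMap.congr_fun (partC (W := W) ρU ρV)
  have hD := LinearMap.congr_fun (partD (V := V) ρU lamW hU)
  simp only [comp_apply, LinearEquiv.coe_coe] at hA hB hC hD
  have hmap : (cotensor k C (U ⊗[k] V) W (rhoUV ρU ρV) lamW).map
      ((eEquiv (k := k) : (U ⊗[k] V) ⊗[k] W ≃ₗ[k] V ⊗[k] (W ⊗[k] U)) :
        (U ⊗[k] V) ⊗[k] W →ₗ[k] V ⊗[k] (W ⊗[k] U)) =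
      cotensor k C V (W ⊗[k] U) ρV (lamWUdef ρU lamW) := by
    ext y
    simp only [Submodule.mem_map, LinearEquiv.coe_coe]
    constructor
    · rintro ⟨x, hx, rfl⟩
      rw [mem_cotensor_iff] at hx ⊢
      rw [hA, hx, hB]
    · intro hy
      refine ⟨(eEquiv (k := k)).symm y, ?_, by simp⟩
      rw [mem_cotensor_iff] at hy ⊢
      have h1 := hC ((eEquiv (k := k)).symm y)
      have h2 := hD ((eEquiv (k := k)).symm y)
      rw [LinearEquiv.apply_symm_apply] at h1 h2
      rw [← h1, hy, h2]
  exact ⟨((eEquiv (k := k)).submoduleMap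
      (cotensor k C (U ⊗[k] V) W (rhoUV ρU ρV) lamW)).trans (LinearEquiv.ofEq _ _ hmap)⟩
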